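/- arXiv:1907.00752 — 2 statements merged into one kernel-verified Lean document; each statement's English description precedes it below -/
import Mathlib

section
/- Let A be a total order on a finite candidate set C and let V be a strict weak order on C (a strict partial order whose incomparability relation is transitive). If V contains a u-valley with respect to A, then V contains a v-valley with respect to A. Consequently, a strict weak order V can be extended to a total order single-peaked with respect to A if and only if V contains no v-valley with respect to A. -/
def VValley {C : Type*} (A V : C → C → Prop) : Prop :=
  ∃ c1 c2 c3 : C, A c1 c2 ∧ A c2 c3 ∧ V c1 c2 ∧ V c3 c2

def UValley {C : Type*} (A V : C → C → Prop) : Prop :=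
  ∃ a b c d : C, a ≠ b ∧ a ≠ c ∧ a ≠ d ∧ b ≠ c ∧ b ≠ d ∧ c ≠ d ∧
    A a b ∧ A b d ∧ A a c ∧ A c d ∧ V a b ∧ V d c

def Extends {C : Type*} (V T : C → C → Prop) : Prop :=
  ∀ x y, V x y → T x y

/-- `V` is a strict partial order: asymmetric and transitive. -/
def IsSPO {C : Type*} (V : C → C → Prop) : Prop :=
  (∀ x y, V x y → ¬ V y x) ∧ (∀ x y z, V x y → V y z → V x z)

/-- `V` is a strict weak order: a strict partial order with transitive incomparability. -/
def IsSWO {C : Type*} (V : C → C → Prop) : Prop :=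
  IsSPO V ∧ ∀ x y z, (¬ V x y ∧ ¬ V y x) → (¬ V y z ∧ ¬ V z y) → (¬ V x z ∧ ¬ V z x)

/-- `V` possibly single-peaked w.r.t. axis `A`: it extends to a total order with no v-valley. -/
def PossSP {C : Type*} (A V : C → C → Prop) : Prop :=
  ∃ T : C → C → Prop, IsStrictTotalOrder C T ∧ Extends V T ∧ ¬ VValley A T

/-!
A strict weak order is negatively transitive: `V x z` forces `V x y` or `V y z`. Applied to a
u-valley `a ⊳ b ⊳ d`, `a ⊳ c ⊳ d` this gives `a ≻ c` (a v-valley at `c`), `d ≻ b` (a v-valley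
at `b`), or `c ≻ b ≻ c`. The same argument shows that without v-valleys the leftmost or the
rightmost of any finite set of candidates is a worst one among them. Peeling such worst ends
off one at a time ranks all candidates bottom-up; every candidate is ranked below the ones
that remain, which all lie on one side of it, so the ranking is single-peaked and extends `V`.
-/

namespace IsSWO

variable {C : Type*} {V : C → C → Prop}

lemma ne_of_rel (hV : IsSWO V) {x y : C} (h : V x y) : x ≠ y := by
  rintro rfl
  exact hV.1.1 x x h h

lemma rel_or_rel (hV : IsSWO V) {x z : C} (hxz : V x z) (y : C) : V x y ∨ V y z := by
  obtain ⟨⟨-, trans⟩, incomp_trans⟩ := hV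
  by_contra! h
  by_cases hyx : V y x
  · exact h.2 (trans _ _ _ hyx hxz)
  by_cases hzy : V z y
  · exact h.1 (trans _ _ _ hxz hzy)
  exact (incomp_trans x y z ⟨h.1, hyx⟩ ⟨h.2, hzy⟩).1 hxz

end IsSWO

section

variable {C : Type*} {A V : C → C → Prop}

lemma VValley.mono {T : C → C → Prop} (hVT : Extends V T) : VValley A V → VValley A T
  | ⟨c1, c2, c3, h12, h23, v12, v32⟩ => ⟨c1, c2, c3, h12, h23, hVT _ _ v12, hVT _ _ v32⟩

lemma PossSP.not_vValley : PossSP A V → ¬ VValley A V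
  | ⟨_, _, hVT, hT⟩ => fun hV => hT (hV.mono hVT)

lemma UValley.vValley (hV : IsSWO V) : UValley A V → VValley A V := by
  rintro ⟨a, b, c, d, -, -, -, -, -, -, hab, hbd, hac, hcd, Vab, Vdc⟩
  rcases hV.rel_or_rel Vab c with Vac | Vcb
  · exact ⟨a, c, d, hac, hcd, Vac, Vdc⟩
  rcases hV.rel_or_rel Vdc b with Vdb | Vbc
  · exact ⟨a, b, d, hab, hbd, Vab, Vdb⟩
  exact absurd Vbc (hV.1.1 _ _ Vcb)

end

section LinearAxis

variable {C : Type*} [LinearOrder C] {V : C → C → Prop}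

lemma forall_not_rel_or_forall_not_rel (hV : IsSWO V) (hNV : ¬ VValley (· < ·) V)
    {S : Set C} {m M : C} (hm : ∀ x ∈ S, m ≤ x) (hM : ∀ x ∈ S, x ≤ M) :
    (∀ x ∈ S, ¬ V m x) ∨ (∀ x ∈ S, ¬ V M x) := by
  by_contra! h
  obtain ⟨⟨x, hx, Vmx⟩, ⟨y, hy, VMy⟩⟩ := h
  have hmx := (hm x hx).lt_of_ne (hV.ne_of_rel Vmx)
  have hyM := (hM y hy).lt_of_ne (hV.ne_of_rel VMy).symm
  rcases hV.rel_or_rel Vmx M with VmM | VMx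
  · rcases hV.rel_or_rel VMy m with VMm | Vmy
    · exact hV.1.1 _ _ VmM VMm
    · exact hNV ⟨m, y, M, (hm y hy).lt_of_ne (hV.ne_of_rel Vmy), hyM, Vmy, VMy⟩
  · exact hNV ⟨m, x, M, hmx, (hM x hx).lt_of_ne (hV.ne_of_rel VMx).symm, Vmx, VMx⟩

lemma exists_worst_of_forall_le_or_forall_ge (hV : IsSWO V) (hNV : ¬ VValley (· < ·) V)
    {S : Finset C} (hS : S.Nonempty) :
    ∃ w ∈ S, (∀ z ∈ S, ¬ V w z) ∧ ((∀ x ∈ S, w ≤ x) ∨ (∀ x ∈ S, x ≤ w)) := by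
  have hmin (x) (hx : x ∈ S) : S.min' hS ≤ x := S.min'_le x hx
  have hmax (x) (hx : x ∈ S) : x ≤ S.max' hS := S.le_max' x hx
  rcases forall_not_rel_or_forall_not_rel hV hNV hmin hmax with h | h
  · exact ⟨_, S.min'_mem hS, h, .inl hmin⟩
  · exact ⟨_, S.max'_mem hS, h, .inr hmax⟩

lemma exists_singlePeaked_rank (hV : IsSWO V) (hNV : ¬ VValley (· < ·) V) (S : Finset C) :
    ∃ f : C → ℕ, Set.InjOn f S ∧ (∀ x ∈ S, ∀ y ∈ S, V x y → f y < f x) ∧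
      ∀ x ∈ S, ∀ y ∈ S, ∀ z ∈ S, x < y → y < z → ¬ (f y < f x ∧ f y < f z) := by
  induction S using Finset.strongInduction with
  | H S ih =>
  rcases S.eq_empty_or_nonempty with rfl | hS
  · exact ⟨0, by simp, by simp, by simp⟩
  obtain ⟨w, hw, hworst, hend⟩ := exists_worst_of_forall_le_or_forall_ge hV hNV hS
  obtain ⟨f, hinj, hext, hsp⟩ := ih (S.erase w) (Finset.erase_ssubset hw)
  refine ⟨fun x => if x = w then 0 else f x + 1, ?_, ?_, ?_⟩
  · intro x hx y hy hxy
    simp only at hxy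
    split_ifs at hxy with hxw hyw hyw
    · exact hxw.trans hyw.symm
    · exact hinj (Finset.mem_erase.2 ⟨hxw, hx⟩) (Finset.mem_erase.2 ⟨hyw, hy⟩) (by omega)
  · intro x hx y hy hxy
    have hxw : x ≠ w := fun h => hworst y hy (h ▸ hxy)
    by_cases hyw : y = w
    · simp [hxw, hyw]
    · simpa [hxw, hyw] using
        hext x (Finset.mem_erase.2 ⟨hxw, hx⟩) y (Finset.mem_erase.2 ⟨hyw, hy⟩) hxy
  · intro x hx y hy z hz hxy hyz
    have hyw : y ≠ w := by
      rintro rfl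
      rcases hend with h | h
      · exact (h x hx).not_gt hxy
      · exact (h z hz).not_gt hyz
    by_cases hxw : x = w
    · simp [hxw, hyw]
    by_cases hzw : z = w
    · simp [hzw, hyw]
    simpa [hxw, hyw, hzw] using hsp x (Finset.mem_erase.2 ⟨hxw, hx⟩) y
      (Finset.mem_erase.2 ⟨hyw, hy⟩) z (Finset.mem_erase.2 ⟨hzw, hz⟩) hxy hyz

lemma possSP_of_not_vValley [Finite C] (hV : IsSWO V) (hNV : ¬ VValley (· < ·) V) :
    PossSP (· < ·) V := by
  cases nonempty_fintype C
  obtain ⟨f, hinj, hext, hsp⟩ := exists_singlePeaked_rank hV hNV Finset.univ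
  refine ⟨Function.onFun (· > ·) f, Function.Injective.isStrictTotalOrder_onFun _ ?_,
    fun x y h => hext x (Finset.mem_univ _) y (Finset.mem_univ _) h, ?_⟩
  · simpa using hinj
  · rintro ⟨x, y, z, hxy, hyz, hx, hz⟩
    exact hsp x (Finset.mem_univ _) y (Finset.mem_univ _) z (Finset.mem_univ _) hxy hyz ⟨hx, hz⟩

end LinearAxis

theorem stmt4 {C : Type*} [Fintype C] (A V : C → C → Prop)
    (hA : IsStrictTotalOrder C A) (hV : IsSWO V) :
    (UValley A V → VValley A V) ∧
    ((∃ T : C → C → Prop, IsStrictTotalOrder C T ∧ Extends V T ∧ ¬ VValley A T) ↔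
      ¬ VValley A V) := by
  classical
  -- its `<` is `A` by definition, so the lemmas about `(· < ·)` apply to `A`
  let : LinearOrder C := linearOrderOfSTO A
  exact ⟨UValley.vValley hV, PossSP.not_vValley, possSP_of_not_vValley hV⟩
end

section
/- Let V be a strict weak order on a finite candidate set C, let A be an axis, and suppose V contains a nonpeak plateau with respect to A or an indifference class of size at least three among non-maximal elements mutually indifferent. If V contains a nonpeak plateau a ⊳ b ⊳ c on A with (a ≻ b and b ∼ c) or (c ≻ b and b ∼ a), then there exists a linear extension of V that contains a v-valley with respect to A, i.e., V is not necessarily single-peaked with respect to A. -/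
/-- `V` is single-plateaued w.r.t. `A`: the axis splits into consecutive segments
`X`, `Y`, `Z` where `Y` is exactly the set of maximal elements, `V` strictly increases
along `X`, the elements of `Y` are preferred to everything else, and `V` strictly
decreases along `Z`. -/
def SinglePlateaued {C : Type*} (A V : C → C → Prop) : Prop :=
  ∃ X Y Z : Set C,
    (∀ c, c ∈ X ∨ c ∈ Y ∨ c ∈ Z) ∧
    Disjoint X Y ∧ Disjoint Y Z ∧ Disjoint X Z ∧
    (∀ x ∈ X, ∀ y ∈ Y, A x y) ∧ (∀ y ∈ Y, ∀ z ∈ Z, A y z) ∧ (∀ x ∈ X, ∀ z ∈ Z, A x z) ∧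
    Y = {y | ∀ c, ¬ V c y} ∧
    (∀ x ∈ X, ∀ x' ∈ X, A x x' → V x' x) ∧
    (∀ y ∈ Y, ∀ c ∈ X ∪ Z, V y c) ∧
    (∀ z ∈ Z, ∀ z' ∈ Z, A z z' → V z z')

/-- A nonpeak plateau w.r.t. `A`: `a ⊳ b ⊳ c` with (`a ≻ b` and `b ∼ c`) or (`c ≻ b` and `b ∼ a`). -/
def NonpeakPlateau {C : Type*} (A V : C → C → Prop) : Prop :=
  ∃ a b c : C, A a b ∧ A b c ∧
    ((V a b ∧ ¬ V b c ∧ ¬ V c b) ∨ (V c b ∧ ¬ V b a ∧ ¬ V a b))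

/-! Refine `V` to a total order by breaking its ties with an arbitrary strict total order
chosen so that the indifferent end of the plateau comes before its middle `b`; in that
extension `b` is below both of its axis neighbours, a v-valley. -/

section TieBreak

variable {C : Type*} (V L : C → C → Prop)

def tieBreak (x y : C) : Prop :=
  V x y ∨ (¬ V x y ∧ ¬ V y x ∧ L x y)

theorem extends_tieBreak : Extends V (tieBreak V L) :=
  fun _ _ h => Or.inl h

variable {V L}

theorem IsSWO.isStrictTotalOrder_tieBreak (hV : IsSWO V) (hL : IsStrictTotalOrder C L) :
    IsStrictTotalOrder C (tieBreak V L) := by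
  obtain ⟨⟨hasymm, htrans⟩, hindiff⟩ := hV
  have hV_of_indiff_right {x y z : C} (hxy : V x y) (hyz : ¬ V y z ∧ ¬ V z y) : V x z := by
    by_contra hxz
    by_cases hzx : V z x
    · exact hyz.2 (htrans _ _ _ hzx hxy)
    · exact (hindiff x z y ⟨hxz, hzx⟩ ⟨hyz.2, hyz.1⟩).1 hxy
  have hV_of_indiff_left {x y z : C} (hxy : ¬ V x y ∧ ¬ V y x) (hyz : V y z) : V x z := by
    by_contra hxz
    by_cases hzx : V z x
    · exact hxy.2 (htrans _ _ _ hyz hzx)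
    · exact (hindiff y x z ⟨hxy.2, hxy.1⟩ ⟨hxz, hzx⟩).1 hyz
  refine { trichotomous := ?_, irrefl := ?_, trans := ?_ }
  · intro x y hxy hyx
    by_contra hne
    simp only [tieBreak, not_or, not_and] at hxy hyx
    rcases trichotomous_of L x y with h | h | h
    · exact hxy.2 hxy.1 hyx.1 h
    · exact hne h
    · exact hyx.2 hyx.1 hxy.1 h
  · rintro x (h | ⟨-, -, h⟩)
    · exact hasymm x x h h
    · exact hL.irrefl x h
  · rintro x y z (hxy | ⟨hnxy, hnyx, hLxy⟩) (hyz | ⟨hnyz, hnzy, hLyz⟩)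
    · exact Or.inl (htrans _ _ _ hxy hyz)
    · exact Or.inl (hV_of_indiff_right hxy ⟨hnyz, hnzy⟩)
    · exact Or.inl (hV_of_indiff_left ⟨hnxy, hnyx⟩ hyz)
    · obtain ⟨hnxz, hnzx⟩ := hindiff x y z ⟨hnxy, hnyx⟩ ⟨hnyz, hnzy⟩
      exact Or.inr ⟨hnxz, hnzx, hL.trans _ _ _ hLxy hLyz⟩

end TieBreak

theorem exists_isStrictTotalOrder_rel {C : Type*} {u v : C} (huv : u ≠ v) :
    ∃ L : C → C → Prop, IsStrictTotalOrder C L ∧ L u v := by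
  rcases trichotomous_of WellOrderingRel u v with h | h | h
  · exact ⟨WellOrderingRel, inferInstance, h⟩
  · exact absurd h huv
  · exact ⟨Function.swap WellOrderingRel, inferInstance, h⟩

theorem IsSWO.exists_extension_rel_of_indiff {C : Type*} {V : C → C → Prop} (hV : IsSWO V)
    {u v : C} (huv : u ≠ v) (hnuv : ¬ V u v) (hnvu : ¬ V v u) :
    ∃ T : C → C → Prop, IsStrictTotalOrder C T ∧ Extends V T ∧ T u v := by
  obtain ⟨L, hL, hLuv⟩ := exists_isStrictTotalOrder_rel huv
  exact ⟨tieBreak V L, hV.isStrictTotalOrder_tieBreak hL, extends_tieBreak V L,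
    Or.inr ⟨hnuv, hnvu, hLuv⟩⟩

theorem stmt15_general {C : Type*} (A V : C → C → Prop)
    (hA : IsStrictTotalOrder C A) (hV : IsSWO V)
    (hnp : NonpeakPlateau A V) :
    ∃ T : C → C → Prop, IsStrictTotalOrder C T ∧ Extends V T ∧ VValley A T := by
  obtain ⟨a, b, c, hab, hbc, ⟨hVab, hnbc, hncb⟩ | ⟨hVcb, hnba, hnab⟩⟩ := hnp
  · have hcb : c ≠ b := fun h => hA.irrefl b (h ▸ hbc)
    obtain ⟨T, hT, hVT, hTcb⟩ := hV.exists_extension_rel_of_indiff hcb hncb hnbc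
    exact ⟨T, hT, hVT, a, b, c, hab, hbc, hVT a b hVab, hTcb⟩
  · have hab' : a ≠ b := fun h => hA.irrefl b (h ▸ hab)
    obtain ⟨T, hT, hVT, hTab⟩ := hV.exists_extension_rel_of_indiff hab' hnab hnba
    exact ⟨T, hT, hVT, a, b, c, hab, hbc, hTab, hVT c b hVcb⟩

theorem stmt15 {C : Type*} [Fintype C] (A V : C → C → Prop)
    (hA : IsStrictTotalOrder C A) (hV : IsSWO V)
    (hnp : NonpeakPlateau A V) :
    ∃ T : C → C → Prop, IsStrictTotalOrder C T ∧ Extends V T ∧ VValley A T :=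
  stmt15_general A V hA hV hnp
end
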